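/- (Implicit duality theorem) Let S, P, Q be pairwise disjoint finite sets and let K_{SP}, K_{PQ} be generalized number lattices. Then (K_{SP} ↔ K_{PQ})^d = K_{SP}^d ⇌ K_{PQ}^d, where K ↔ K' is the matched composition { (f_S,g_Q) : ∃ h_P, (f_S,h_P) ∈ K_{SP}, (h_P,g_Q) ∈ K_{PQ} } and K ⇌ K' is the skewed composition { (f_S,g_Q) : ∃ h_P, (f_S,h_P) ∈ K_{SP}, (−h_P,g_Q) ∈ K_{PQ} }. -/

import Mathlib

/-!
The inclusion of the skewed composition of the duals in the dual of the matched composition is a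
direct computation. For the converse, let `K = K_SP × K_PQ`, let `V` be the subspace where the two
`P`-coordinates agree, and let `φ₀` pair a vector with `x` on its `S`- and `Q`-coordinates; that
`x` lies in the dual of the matched composition says exactly that `φ₀` is integral on `K ∩ V`.
Such a functional agrees on `V` with one that is integral on all of `K`: first make it vanish on
the `ℚ`-part of `K`, then correct it through the quotient by `V` and that part, where the image of
the `ℤ`-part of `K` is a free `ℤ`-module. The correction vanishes on `V`, so it is the pairing of
the difference of the two `P`-coordinates with some `h`, and this `h` is the required witness.
-/

open Submodule Matrix

def IsGenNumLat {M : Type*} [AddCommGroup M] [Module ℚ M] (K : Set M) : Prop :=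
  ∃ (n k : ℕ) (b : Fin n → M) (c : Fin k → M),
    K = {x | ∃ (l : Fin n → ℤ) (m : Fin k → ℚ),
      x = (∑ i, (l i : ℚ) • b i) + ∑ j, m j • c j}

/-- Vectors on the disjoint union of `A` and `B` are represented as pairs. -/
def dualLat2 {A B : Type*} [Fintype A] [Fintype B]
    (K : Set ((A → ℚ) × (B → ℚ))) : Set ((A → ℚ) × (B → ℚ)) :=
  {g | ∀ f ∈ K, ∃ z : ℤ, (∑ a, f.1 a * g.1 a) + ∑ b, f.2 b * g.2 b = (z : ℚ)}

def matchedComp {X Y Z : Type*} (K : Set (X × Y)) (K' : Set (Y × Z)) : Set (X × Z) :=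
  {x | ∃ h : Y, (x.1, h) ∈ K ∧ (h, x.2) ∈ K'}

def skewedComp {X Y Z : Type*} [Neg Y] (K : Set (X × Y)) (K' : Set (Y × Z)) : Set (X × Z) :=
  {x | ∃ h : Y, (x.1, h) ∈ K ∧ (-h, x.2) ∈ K'}

lemma mem_dualLat2_iff {A B : Type*} [Fintype A] [Fintype B] {K : Set ((A → ℚ) × (B → ℚ))}
    {g : (A → ℚ) × (B → ℚ)} :
    g ∈ dualLat2 K ↔ ∀ f ∈ K, ∃ z : ℤ, f.1 ⬝ᵥ g.1 + f.2 ⬝ᵥ g.2 = z :=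
  Iff.rfl

lemma IsGenNumLat.exists_fg_sup {M : Type*} [AddCommGroup M] [Module ℚ M] {K : Set M}
    (hK : IsGenNumLat K) :
    ∃ (L : Submodule ℤ M) (W : Submodule ℚ M), L.FG ∧ K = ↑(L ⊔ W.restrictScalars ℤ) := by
  obtain ⟨n, k, b, c, rfl⟩ := hK
  refine ⟨span ℤ (Set.range b), span ℚ (Set.range c), fg_span (Set.finite_range b), ?_⟩
  ext x
  simp only [Set.mem_ofPred_eq, SetLike.mem_coe, mem_sup, restrictScalars_mem,
    mem_span_range_iff_exists_fun, Int.cast_smul_eq_zsmul]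
  constructor
  · rintro ⟨l, m, rfl⟩
    exact ⟨_, ⟨l, rfl⟩, _, ⟨m, rfl⟩, rfl⟩
  · rintro ⟨_, ⟨l, rfl⟩, _, ⟨m, rfl⟩, rfl⟩
    exact ⟨l, m, rfl⟩

lemma Submodule.mem_prod_sup_restrictScalars_prod {M N : Type*} [AddCommGroup M] [Module ℚ M]
    [AddCommGroup N] [Module ℚ N] (L₁ : Submodule ℤ M) (L₂ : Submodule ℤ N)
    (W₁ : Submodule ℚ M) (W₂ : Submodule ℚ N) (y : M × N) :
    y ∈ L₁.prod L₂ ⊔ (W₁.prod W₂).restrictScalars ℤ ↔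
      y.1 ∈ L₁ ⊔ W₁.restrictScalars ℤ ∧ y.2 ∈ L₂ ⊔ W₂.restrictScalars ℤ := by
  rw [show (W₁.prod W₂).restrictScalars ℤ
    = (W₁.restrictScalars ℤ).prod (W₂.restrictScalars ℤ) from rfl, prod_sup_prod, mem_prod]

lemma Rat.eq_zero_of_forall_mul_eq_intCast {a : ℚ} (h : ∀ q : ℚ, ∃ z : ℤ, q * a = z) :
    a = 0 := by
  by_contra ha
  obtain ⟨z, hz⟩ := h (2 * a)⁻¹
  rw [show (2 * a)⁻¹ * a = 1 / 2 by field_simp] at hz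
  have : 2 * z = 1 := by exact_mod_cast (by rw [← hz]; ring : (2 * z : ℚ) = 1)
  omega

lemma LinearIndependent.exists_dual_apply_eq {K V ι : Type*} [Field K] [AddCommGroup V]
    [Module K V] {v : ι → V} (hv : LinearIndependent K v) (c : ι → K) :
    ∃ χ : Module.Dual K V, ∀ i, χ (v i) = c i := by
  obtain ⟨χ, hχ⟩ := LinearMap.exists_extend ((Module.Basis.span hv).constr K c)
  refine ⟨χ, fun i => ?_⟩
  have := LinearMap.congr_fun hχ (Module.Basis.span hv i)
  rwa [Module.Basis.constr_basis, LinearMap.comp_apply, Submodule.subtype_apply,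
    Module.Basis.span_apply] at this

lemma LinearMap.exists_eqOn_of_eq_zero_on_inf {K E F : Type*} [DivisionRing K] [AddCommGroup E]
    [Module K E] [AddCommGroup F] [Module K F] {V W : Submodule K E} (φ : E →ₗ[K] F)
    (h : ∀ x ∈ V ⊓ W, φ x = 0) :
    ∃ ψ : E →ₗ[K] F, (∀ x ∈ V, ψ x = φ x) ∧ ∀ x ∈ W, ψ x = 0 := by
  let f : E →ₗ.[K] F := ⟨V, φ.domRestrict V⟩
  let g : E →ₗ.[K] F := ⟨W, 0⟩
  have hfg : ∀ (x : f.domain) (y : g.domain), (x : E) = y → f x = g y := fun x y hxy =>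
    h x ⟨x.2, hxy ▸ y.2⟩
  obtain ⟨ψ, hψ⟩ := LinearMap.exists_extend (f.sup g hfg).toFun
  have hψ' (x : (f.sup g hfg).domain) : ψ x = f.sup g hfg x := LinearMap.congr_fun hψ x
  refine ⟨ψ, fun x hx => ?_, fun x hx => ?_⟩
  · exact (hψ' ⟨x, mem_sup_left hx⟩).trans ((f.left_le_sup g hfg).2 (x := ⟨x, hx⟩) rfl).symm
  · exact (hψ' ⟨x, mem_sup_right hx⟩).trans ((f.right_le_sup g hfg).2 (x := ⟨x, hx⟩) rfl).symm

lemma LinearMap.eq_comp_of_ker_le {R M N F : Type*} [CommRing R] [AddCommGroup M] [Module R M]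
    [AddCommGroup N] [Module R N] [AddCommGroup F] [Module R F]
    {T : M →ₗ[R] N} {s : N →ₗ[R] M} (hs : T ∘ₗ s = LinearMap.id) {g : M →ₗ[R] F}
    (hg : LinearMap.ker T ≤ LinearMap.ker g) : g = (g ∘ₗ s) ∘ₗ T := by
  ext y
  have hy : y - s (T y) ∈ LinearMap.ker T := by
    simp [LinearMap.mem_ker, ← LinearMap.comp_apply T s, hs]
  simpa [sub_eq_zero] using hg hy

section IntegralExtension

variable {E : Type*} [AddCommGroup E] [Module ℚ E]

lemma exists_integral_extension_of_fg {L : Submodule ℤ E} (hL : L.FG)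
    (V : Submodule ℚ E) (φ : E →ₗ[ℚ] ℚ) (hφ : ∀ x ∈ L, x ∈ V → ∃ z : ℤ, φ x = z) :
    ∃ ψ : E →ₗ[ℚ] ℚ, (∀ x ∈ V, ψ x = φ x) ∧ ∀ x ∈ L, ∃ z : ℤ, ψ x = z := by
  let π : E →ₗ[ℤ] E ⧸ V := V.mkQ.restrictScalars ℤ
  let N := L.map π
  have : Module.Finite ℤ N := Module.Finite.iff_fg.2 (hL.map π)
  have : Module.IsTorsionFree ℤ (E ⧸ V) := .trans_faithfulSMul ℤ ℚ _
  -- `N` is free; correct `φ` by a functional on `E ⧸ V` so that it kills lifts `e i` of a basis.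
  let B := Module.Free.chooseBasis ℤ N
  choose e heL he using fun i => (Submodule.mem_map.1 (B i).2)
  have hB : LinearIndependent ℚ (fun i => (B i : E ⧸ V)) :=
    (LinearIndependent.iff_fractionRing ℤ ℚ).1 (B.linearIndependent.map' N.subtype N.ker_subtype)
  obtain ⟨χ, hχ⟩ := hB.exists_dual_apply_eq (fun i => -φ (e i))
  refine ⟨φ + χ ∘ₗ V.mkQ, fun x hx => by simp [(Submodule.Quotient.mk_eq_zero V).2 hx], ?_⟩
  intro x hx
  let r := B.repr ⟨π x, Submodule.mem_map_of_mem hx⟩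
  have hπ : π x = π (∑ i, r i • e i) := by
    have := congrArg Subtype.val (B.sum_repr ⟨π x, Submodule.mem_map_of_mem hx⟩).symm
    simp only [map_sum, map_zsmul, he]
    simpa only [coe_sum, coe_smul] using this
  have hyV : x - ∑ i, r i • e i ∈ V := by
    rw [← Submodule.Quotient.mk_eq_zero]
    exact (map_sub π _ _).trans (sub_eq_zero.2 hπ)
  obtain ⟨z, hz⟩ := hφ _ (L.sub_mem hx (L.sum_mem fun i _ => L.smul_mem _ (heL i))) hyV
  refine ⟨z, ?_⟩
  have hψe (i) : (φ + χ ∘ₗ V.mkQ) (e i) = 0 := by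
    show φ (e i) + χ (π (e i)) = 0
    rw [he, hχ, add_neg_cancel]
  calc (φ + χ ∘ₗ V.mkQ) x = (φ + χ ∘ₗ V.mkQ) (x - ∑ i, r i • e i) := by
        simp [map_sub, map_sum, map_zsmul, hψe]
    _ = z := by simp [(Submodule.Quotient.mk_eq_zero V).2 hyV, hz]

theorem exists_integral_extension {L : Submodule ℤ E} (hL : L.FG)
    (W V : Submodule ℚ E) (φ : E →ₗ[ℚ] ℚ)
    (hφ : ∀ x ∈ L ⊔ W.restrictScalars ℤ, x ∈ V → ∃ z : ℤ, φ x = z) :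
    ∃ ψ : E →ₗ[ℚ] ℚ, (∀ x ∈ V, ψ x = φ x) ∧
      ∀ x ∈ L ⊔ W.restrictScalars ℤ, ∃ z : ℤ, ψ x = z := by
  have hVW : ∀ x ∈ V ⊓ W, φ x = 0 := fun x ⟨hxV, hxW⟩ =>
    Rat.eq_zero_of_forall_mul_eq_intCast fun q => by
      simpa using hφ (q • x) (mem_sup_right (W.smul_mem q hxW)) (V.smul_mem q hxV)
  obtain ⟨φ₂, hφ₂V, hφ₂W⟩ := φ.exists_eqOn_of_eq_zero_on_inf hVW
  have hφ₂ : ∀ x ∈ L, x ∈ V ⊔ W → ∃ z : ℤ, φ₂ x = z := by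
    intro x hxL hx
    obtain ⟨v, hv, w, hw, rfl⟩ := mem_sup.1 hx
    have hvK : v ∈ L ⊔ W.restrictScalars ℤ := by
      have hw' : -w ∈ W.restrictScalars ℤ := W.neg_mem hw
      simpa using add_mem (mem_sup_left hxL) (mem_sup_right hw')
    rw [map_add, hφ₂W w hw, add_zero, hφ₂V v hv]
    exact hφ v hvK hv
  obtain ⟨ψ, hψV, hψL⟩ := exists_integral_extension_of_fg hL (V ⊔ W) φ₂ hφ₂
  refine ⟨ψ, fun x hx => (hψV x (mem_sup_left hx)).trans (hφ₂V x hx), fun x hx => ?_⟩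
  obtain ⟨l, hl, w, hw, rfl⟩ := mem_sup.1 hx
  rw [map_add, hψV w (mem_sup_right hw), hφ₂W w hw, add_zero]
  exact hψL l hl

end IntegralExtension

section Composition

variable {S P Q : Type*} [Fintype S] [Fintype P] [Fintype Q]

lemma skewedComp_dualLat2_subset (KSP : Set ((S → ℚ) × (P → ℚ)))
    (KPQ : Set ((P → ℚ) × (Q → ℚ))) :
    skewedComp (dualLat2 KSP) (dualLat2 KPQ) ⊆ dualLat2 (matchedComp KSP KPQ) := by
  rintro x ⟨h, hSP, hPQ⟩
  refine mem_dualLat2_iff.2 fun f ⟨k, hk₁, hk₂⟩ => ?_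
  obtain ⟨z₁, hz₁⟩ := mem_dualLat2_iff.1 hSP (f.1, k) hk₁
  obtain ⟨z₂, hz₂⟩ := mem_dualLat2_iff.1 hPQ (k, f.2) hk₂
  refine ⟨z₁ + z₂, ?_⟩
  simp only [dotProduct_neg] at hz₁ hz₂
  push_cast
  linear_combination hz₁ + hz₂

lemma LinearMap.exists_eq_add_dotProduct_of_eqOn {X Z : Type*} [AddCommGroup X] [Module ℚ X]
    [AddCommGroup Z] [Module ℚ Z] (ψ φ : (X × (P → ℚ)) × ((P → ℚ) × Z) →ₗ[ℚ] ℚ)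
    (hψ : ∀ y, y.1.2 = y.2.1 → ψ y = φ y) :
    ∃ h : P → ℚ, ∀ y, ψ y = φ y + h ⬝ᵥ (y.1.2 - y.2.1) := by
  classical
  let T := LinearMap.snd ℚ X (P → ℚ) ∘ₗ LinearMap.fst ℚ _ _ -
    LinearMap.fst ℚ (P → ℚ) Z ∘ₗ LinearMap.snd ℚ _ _
  let s := LinearMap.inl ℚ _ ((P → ℚ) × Z) ∘ₗ LinearMap.inr ℚ X (P → ℚ)
  have hfac := LinearMap.eq_comp_of_ker_le (T := T) (s := s) (by ext; simp [T, s])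
    (g := ψ - φ) fun y hy => by simp [hψ y (sub_eq_zero.1 hy)]
  refine ⟨(dotProductEquiv ℚ P).symm ((ψ - φ) ∘ₗ s), fun y => ?_⟩
  rw [← dotProductEquiv_apply_apply, LinearEquiv.apply_symm_apply]
  exact eq_add_of_sub_eq' (LinearMap.congr_fun hfac y)

theorem dualLat2_matchedComp_subset {KSP : Set ((S → ℚ) × (P → ℚ))}
    {KPQ : Set ((P → ℚ) × (Q → ℚ))} (hSP : IsGenNumLat KSP) (hPQ : IsGenNumLat KPQ) :
    dualLat2 (matchedComp KSP KPQ) ⊆ skewedComp (dualLat2 KSP) (dualLat2 KPQ) := by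
  classical
  intro x hx
  obtain ⟨L₁, W₁, hL₁, rfl⟩ := hSP.exists_fg_sup
  obtain ⟨L₂, W₂, hL₂, rfl⟩ := hPQ.exists_fg_sup
  have hK := mem_prod_sup_restrictScalars_prod L₁ L₂ W₁ W₂
  let V := LinearMap.eqLocus (LinearMap.snd ℚ (S → ℚ) (P → ℚ) ∘ₗ LinearMap.fst ℚ _ _)
    (LinearMap.fst ℚ (P → ℚ) (Q → ℚ) ∘ₗ LinearMap.snd ℚ _ _)
  let φ₀ := (dotProductEquiv ℚ S x.1 ∘ₗ LinearMap.fst ℚ (S → ℚ) (P → ℚ)).coprod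
    (dotProductEquiv ℚ Q x.2 ∘ₗ LinearMap.snd ℚ (P → ℚ) (Q → ℚ))
  have hφ₀ (y : ((S → ℚ) × (P → ℚ)) × ((P → ℚ) × (Q → ℚ))) :
      φ₀ y = x.1 ⬝ᵥ y.1.1 + x.2 ⬝ᵥ y.2.2 := rfl
  obtain ⟨ψ, hψV, hψK⟩ := exists_integral_extension (hL₁.prod hL₂) (W₁.prod W₂) V φ₀ <| by
    intro y hy (hyV : y.1.2 = y.2.1)
    obtain ⟨z, hz⟩ := hx (y.1.1, y.2.2) ⟨y.1.2, ((hK y).1 hy).1, hyV ▸ ((hK y).1 hy).2⟩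
    exact ⟨z, by rw [hφ₀, dotProduct_comm x.1, dotProduct_comm x.2]; exact hz⟩
  obtain ⟨h, hψ⟩ := ψ.exists_eq_add_dotProduct_of_eqOn φ₀ fun y hy => hψV y hy
  refine ⟨h, mem_dualLat2_iff.2 fun f hf => ?_, mem_dualLat2_iff.2 fun f hf => ?_⟩
  · obtain ⟨z, hz⟩ := hψK (f, 0) ((hK _).2 ⟨hf, zero_mem _⟩)
    refine ⟨z, ?_⟩
    simp only [hψ, hφ₀, Prod.snd_zero, Prod.fst_zero, dotProduct_zero, sub_zero, add_zero] at hz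
    linear_combination hz + dotProduct_comm f.1 x.1 + dotProduct_comm f.2 h
  · obtain ⟨z, hz⟩ := hψK (0, f) ((hK _).2 ⟨zero_mem _, hf⟩)
    refine ⟨z, ?_⟩
    simp only [hψ, hφ₀, Prod.snd_zero, Prod.fst_zero, dotProduct_zero, zero_sub, dotProduct_neg,
      zero_add] at hz
    linear_combination hz + dotProduct_comm f.2 x.2 + dotProduct_neg f.1 h + dotProduct_comm h f.1

end Composition

/-- Implicit duality theorem: the dual of the matched composition is the
skewed composition of the duals. -/
theorem stmt7 {S P Q : Type*} [Fintype S] [Fintype P] [Fintype Q]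
    (KSP : Set ((S → ℚ) × (P → ℚ))) (KPQ : Set ((P → ℚ) × (Q → ℚ)))
    (h1 : IsGenNumLat KSP) (h2 : IsGenNumLat KPQ) :
    dualLat2 {x : (S → ℚ) × (Q → ℚ) | ∃ h : P → ℚ, (x.1, h) ∈ KSP ∧ (h, x.2) ∈ KPQ} =
      {x : (S → ℚ) × (Q → ℚ) |
        ∃ h : P → ℚ, (x.1, h) ∈ dualLat2 KSP ∧ (-h, x.2) ∈ dualLat2 KPQ} :=
  subset_antisymm (dualLat2_matchedComp_subset h1 h2) (skewedComp_dualLat2_subset KSP KPQ)
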